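/- arXiv:1101.4114 — 4 statements merged into one kernel-verified Lean document; each statement's English description precedes it below -/
import Mathlib

section
/- Let I = ⟨f_1,...,f_r⟩ ⊂ C[Z_1,...,Z_n] and λ ∈ (0,∞)^n. If there exist a polynomial G in the real ideal I' ⊂ R[X_1,...,X_n,Y_1,...,Y_n] generated by {f_j^re, f_j^im : 1 ≤ j ≤ r} ∪ {X_k² + Y_k² - λ_k² : 1 ≤ k ≤ n} and a sum-of-squares polynomial H with G + H + 1 = 0, then λ is not contained in the unlog amoeba U_I = {(|z_1|,...,|z_n|) : z ∈ V(I)}. -/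
/-!
Write a point `z = x + iy` of `ℂⁿ` as `(x, y) ∈ ℝ²ⁿ`. If `z` is a zero of every `f_j` with
`|z_k| = λ_k`, then `(x, y)` is a real zero of every generator of `I'`, hence of `G`.
Evaluating `G + H + 1 = 0` at `(x, y)` then gives `H(x, y) + 1 = 0`, which is impossible since
`H(x, y)` is a sum of squares of reals.
-/

open MvPolynomial

theorem IsSumSq.map {R S F : Type*} [NonUnitalNonAssocSemiring R] [NonUnitalNonAssocSemiring S]
    [FunLike F R S] [NonUnitalRingHomClass F R S] (φ : F) {s : R} (hs : IsSumSq s) :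
    IsSumSq (φ s) := by
  induction hs with
  | zero => simp
  | sq_add a _ ih => simpa using ih.sq_add (φ a)

theorem map_eq_zero_of_mem_span {R S F : Type*} [Semiring R] [Semiring S] [FunLike F R S]
    [RingHomClass F R S] (φ : F) {s : Set R} (hs : ∀ g ∈ s, φ g = 0) {g : R}
    (hg : g ∈ Ideal.span s) : φ g = 0 :=
  RingHom.mem_ker.mp (Ideal.span_le.mpr (fun g hg => RingHom.mem_ker.mpr (hs g hg)) hg)

theorem map_ne_zero_of_add_isSumSq_add_one_eq_zero {A R F : Type*} [Semiring A] [Semiring R]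
    [LinearOrder R] [IsStrictOrderedRing R] [ExistsAddOfLE R] [FunLike F A R] [RingHomClass F A R]
    (φ : F) {G H : A} (hH : IsSumSq H) (hcert : G + H + 1 = 0) : φ G ≠ 0 := by
  intro hG
  have h : φ H + 1 = 0 := by simpa [hG] using congrArg φ hcert
  exact (add_pos_of_nonneg_of_pos (hH.map φ).nonneg one_pos).ne' h

def realCoords {σ : Type*} (z : σ → ℂ) : σ ⊕ σ → ℝ :=
  Sum.elim (fun k => (z k).re) (fun k => (z k).im)

theorem eval_realCoords_eq_zero {σ : Type*} {f : MvPolynomial σ ℂ}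
    {fre fim : MvPolynomial (σ ⊕ σ) ℝ}
    (hdec : ∀ x y : σ → ℝ, eval (fun k => (x k : ℂ) + (y k : ℂ) * Complex.I) f =
      (eval (Sum.elim x y) fre : ℂ) + (eval (Sum.elim x y) fim : ℂ) * Complex.I)
    {z : σ → ℂ} (hz : eval z f = 0) :
    eval (realCoords z) fre = 0 ∧ eval (realCoords z) fim = 0 := by
  have h := hdec (fun k => (z k).re) (fun k => (z k).im)
  simp only [Complex.re_add_im, hz] at h
  simpa [realCoords, Complex.ext_iff] using h.symm

theorem eval_realCoords_sq_add_sq_sub {σ : Type*} (z : σ → ℂ) (k : σ) :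
    eval (realCoords z) (X (Sum.inl k) ^ 2 + X (Sum.inr k) ^ 2 - C (‖z k‖ ^ 2)) = 0 := by
  simp [realCoords, Complex.sq_norm, Complex.normSq_apply, ← sq]

theorem stmt2_general (n r : ℕ) (f : Fin r → MvPolynomial (Fin n) ℂ)
    (fre fim : Fin r → MvPolynomial (Fin n ⊕ Fin n) ℝ)
    (hdec : ∀ j (x y : Fin n → ℝ),
      eval (fun k => (x k : ℂ) + (y k : ℂ) * Complex.I) (f j) =
        (eval (Sum.elim x y) (fre j) : ℂ) + (eval (Sum.elim x y) (fim j) : ℂ) * Complex.I)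
    (l : Fin n → ℝ)
    (G H : MvPolynomial (Fin n ⊕ Fin n) ℝ)
    (hG : G ∈ Ideal.span (Set.range fre ∪ Set.range fim ∪
      Set.range (fun k => X (Sum.inl k) ^ 2 + X (Sum.inr k) ^ 2 - C ((l k) ^ 2))))
    (hH : IsSumSq H)
    (hcert : G + H + 1 = 0) :
    ¬ ∃ z : Fin n → ℂ, (∀ j, eval z (f j) = 0) ∧ ∀ k, ‖z k‖ = l k := by
  rintro ⟨z, hz, habs⟩
  refine map_ne_zero_of_add_isSumSq_add_one_eq_zero (eval (realCoords z)) hH hcert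
    (map_eq_zero_of_mem_span _ ?_ hG)
  rintro g ((⟨j, rfl⟩ | ⟨j, rfl⟩) | ⟨k, rfl⟩)
  · exact (eval_realCoords_eq_zero (hdec j) (hz j)).1
  · exact (eval_realCoords_eq_zero (hdec j) (hz j)).2
  · simpa [habs k] using eval_realCoords_sq_add_sq_sub z k

/-- A real Nullstellensatz certificate `G + H + 1 = 0` with `G` in the realified ideal `I'`
and `H` a sum of squares certifies that `λ` is not in the unlog amoeba of `I`. -/
theorem stmt2 (n r : ℕ) (f : Fin r → MvPolynomial (Fin n) ℂ)
    (fre fim : Fin r → MvPolynomial (Fin n ⊕ Fin n) ℝ)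
    (hdec : ∀ j (x y : Fin n → ℝ),
      eval (fun k => (x k : ℂ) + (y k : ℂ) * Complex.I) (f j) =
        (eval (Sum.elim x y) (fre j) : ℂ) + (eval (Sum.elim x y) (fim j) : ℂ) * Complex.I)
    (l : Fin n → ℝ) (hl : ∀ k, 0 < l k)
    (G H : MvPolynomial (Fin n ⊕ Fin n) ℝ)
    (hG : G ∈ Ideal.span (Set.range fre ∪ Set.range fim ∪
      Set.range (fun k => X (Sum.inl k) ^ 2 + X (Sum.inr k) ^ 2 - C ((l k) ^ 2))))
    (hH : IsSumSq H)
    (hcert : G + H + 1 = 0) :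
    ¬ ∃ z : Fin n → ℂ, (∀ j, eval z (f j) = 0) ∧ ∀ k, ‖z k‖ = l k :=
  stmt2_general n r f fre fim hdec l G H hG hH hcert
end

section
/- Let a, b > 0, c ∈ R, and λ_1, λ_2 > 0 with (a² + ab)λ_1² + (b² + ab)λ_2² < c². Then the polynomial identity (aX_1 + bX_2 - c)(aX_1 + bX_2 + c) + (aY_1 + bY_2)² - (a² + ab)(X_1² + Y_1² - λ_1²) - (b² + ab)(X_2² + Y_2² - λ_2²) + ab(X_1 - X_2)² + ab(Y_1 - Y_2)² = (a² + ab)λ_1² + (b² + ab)λ_2² - c² holds in R[X_1,X_2,Y_1,Y_2]; consequently (λ_1,λ_2) is not in the unlog amoeba of f = aZ_1 + bZ_2 + c. -/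
/-!
Write `z_k = x_k + i y_k`. At a zero of `f`, `a x_1 + b x_2 + c = 0` and `a y_1 + b y_2 = 0`, so
evaluating the identity at `(x_1, x_2, y_1, y_2)` with `λ_k = |z_k|` kills the product term, the
square `(a y_1 + b y_2)²` and both modulus constraints, leaving
`a b |z_1 - z_2|² = (a² + ab)|z_1|² + (b² + ab)|z_2|² - c²`.
For `a b ≥ 0` the left side is nonnegative, so the strict inequality rules out such a zero.
-/

open MvPolynomial

theorem linear_amoeba_certificate {R : Type*} [CommRing R] (a b c l1 l2 : R) :
    ((C a * X 0 + C b * X 1 - C c) * (C a * X 0 + C b * X 1 + C c)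
        + (C a * X 2 + C b * X 3) ^ 2
        - C (a ^ 2 + a * b) * (X 0 ^ 2 + X 2 ^ 2 - C (l1 ^ 2))
        - C (b ^ 2 + a * b) * (X 1 ^ 2 + X 3 ^ 2 - C (l2 ^ 2))
        + C (a * b) * (X 0 - X 1) ^ 2 + C (a * b) * (X 2 - X 3) ^ 2
      = (C ((a ^ 2 + a * b) * l1 ^ 2 + (b ^ 2 + a * b) * l2 ^ 2 - c ^ 2) :
          MvPolynomial (Fin 4) R)) := by
  simp only [map_add, map_sub, map_mul, map_pow]
  ring

theorem mul_norm_sub_sq_of_linear_eq_zero {a b c : ℝ} {z1 z2 : ℂ}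
    (hf : (a : ℂ) * z1 + (b : ℂ) * z2 + (c : ℂ) = 0) :
    a * b * ‖z1 - z2‖ ^ 2
      = (a ^ 2 + a * b) * ‖z1‖ ^ 2 + (b ^ 2 + a * b) * ‖z2‖ ^ 2 - c ^ 2 := by
  have hre : a * z1.re + b * z2.re + c = 0 := by simpa using congrArg Complex.re hf
  have him : a * z1.im + b * z2.im = 0 := by simpa using congrArg Complex.im hf
  have heval := congrArg (eval ![z1.re, z2.re, z1.im, z2.im])
    (linear_amoeba_certificate a b c ‖z1‖ ‖z2‖)
  simp only [map_add, map_sub, map_mul, map_pow, eval_C, eval_X, Matrix.cons_val] at heval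
  simp only [Complex.sq_norm, Complex.normSq_apply, Complex.sub_re, Complex.sub_im] at heval ⊢
  linear_combination heval - (a * z1.re + b * z2.re - c) * hre - (a * z1.im + b * z2.im) * him

/-- Variables: `X 0 = X_1`, `X 1 = X_2`, `X 2 = Y_1`, `X 3 = Y_2`. -/
theorem stmt10_general (a b c l1 l2 : ℝ) (ha : 0 < a) (hb : 0 < b)
    (hineq : (a ^ 2 + a * b) * l1 ^ 2 + (b ^ 2 + a * b) * l2 ^ 2 < c ^ 2) :
    ((C a * X 0 + C b * X 1 - C c) * (C a * X 0 + C b * X 1 + C c)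
        + (C a * X 2 + C b * X 3) ^ 2
        - C (a ^ 2 + a * b) * (X 0 ^ 2 + X 2 ^ 2 - C (l1 ^ 2))
        - C (b ^ 2 + a * b) * (X 1 ^ 2 + X 3 ^ 2 - C (l2 ^ 2))
        + C (a * b) * (X 0 - X 1) ^ 2 + C (a * b) * (X 2 - X 3) ^ 2
      = (C ((a ^ 2 + a * b) * l1 ^ 2 + (b ^ 2 + a * b) * l2 ^ 2 - c ^ 2) :
          MvPolynomial (Fin 4) ℝ)) ∧
    ¬ ∃ z1 z2 : ℂ, (a : ℂ) * z1 + (b : ℂ) * z2 + (c : ℂ) = 0 ∧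
        ‖z1‖ = l1 ∧ ‖z2‖ = l2 := by
  refine ⟨linear_amoeba_certificate a b c l1 l2, ?_⟩
  rintro ⟨z1, z2, hf, rfl, rfl⟩
  have hnonneg : 0 ≤ a * b * ‖z1 - z2‖ ^ 2 := by positivity
  rw [mul_norm_sub_sq_of_linear_eq_zero hf] at hnonneg
  linarith

/-- The explicit degree-2 certificate identity for linear amoebas, and the consequence
that `(λ_1, λ_2)` is not in the unlog amoeba of `f = aZ_1 + bZ_2 + c`.
Variables: `X 0 = X_1`, `X 1 = X_2`, `X 2 = Y_1`, `X 3 = Y_2`. -/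
theorem stmt10 (a b c l1 l2 : ℝ) (ha : 0 < a) (hb : 0 < b)
    (hl1 : 0 < l1) (hl2 : 0 < l2)
    (hineq : (a ^ 2 + a * b) * l1 ^ 2 + (b ^ 2 + a * b) * l2 ^ 2 < c ^ 2) :
    ((C a * X 0 + C b * X 1 - C c) * (C a * X 0 + C b * X 1 + C c)
        + (C a * X 2 + C b * X 3) ^ 2
        - C (a ^ 2 + a * b) * (X 0 ^ 2 + X 2 ^ 2 - C (l1 ^ 2))
        - C (b ^ 2 + a * b) * (X 1 ^ 2 + X 3 ^ 2 - C (l2 ^ 2))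
        + C (a * b) * (X 0 - X 1) ^ 2 + C (a * b) * (X 2 - X 3) ^ 2
      = (C ((a ^ 2 + a * b) * l1 ^ 2 + (b ^ 2 + a * b) * l2 ^ 2 - c ^ 2) :
          MvPolynomial (Fin 4) ℝ)) ∧
    ¬ ∃ z1 z2 : ℂ, (a : ℂ) * z1 + (b : ℂ) * z2 + (c : ℂ) = 0 ∧
        ‖z1‖ = l1 ∧ ‖z2‖ = l2 :=
  stmt10_general a b c l1 l2 ha hb hineq
end

section
/- Let a, b > 0, c ∈ R, and λ_1, λ_2 > 0 satisfy (a² + ab)λ_1² + (b² + ab)λ_2² < c². Then there is no point (z_1, z_2) ∈ C² with az_1 + bz_2 + c = 0, |z_1| = λ_1 and |z_2| = λ_2. -/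
/-!
By the triangle inequality a zero of `aZ₁ + bZ₂ + c` on the torus `|z₁| = λ₁`, `|z₂| = λ₂`
forces `|c| ≤ aλ₁ + bλ₂`, and `2ab λ₁λ₂ ≤ ab(λ₁² + λ₂²)` bounds the square of the right-hand side
by `(a² + ab)λ₁² + (b² + ab)λ₂²`.
-/

theorem abs_le_of_mul_add_mul_add_eq_zero {a b c : ℝ} {z₁ z₂ : ℂ}
    (h : (a : ℂ) * z₁ + (b : ℂ) * z₂ + (c : ℂ) = 0) :
    |c| ≤ |a| * ‖z₁‖ + |b| * ‖z₂‖ := by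
  have hc : (c : ℂ) = -((a : ℂ) * z₁ + (b : ℂ) * z₂) := by linear_combination h
  calc |c| = ‖(c : ℂ)‖ := (Complex.norm_real c).symm
    _ = ‖(a : ℂ) * z₁ + (b : ℂ) * z₂‖ := by rw [hc, norm_neg]
    _ ≤ ‖(a : ℂ) * z₁‖ + ‖(b : ℂ) * z₂‖ := norm_add_le _ _
    _ = |a| * ‖z₁‖ + |b| * ‖z₂‖ := by simp only [norm_mul, Complex.norm_real, Real.norm_eq_abs]

theorem mul_add_mul_sq_le {a b x y : ℝ} (hab : 0 ≤ a * b) :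
    (a * x + b * y) ^ 2 ≤ (a ^ 2 + a * b) * x ^ 2 + (b ^ 2 + a * b) * y ^ 2 := by
  nlinarith [mul_nonneg hab (sq_nonneg (x - y))]

theorem stmt11_general (a b c l1 l2 : ℝ) (ha : 0 < a) (hb : 0 < b)
    (hineq : (a ^ 2 + a * b) * l1 ^ 2 + (b ^ 2 + a * b) * l2 ^ 2 < c ^ 2) :
    ¬ ∃ z1 z2 : ℂ, (a : ℂ) * z1 + (b : ℂ) * z2 + (c : ℂ) = 0 ∧
        ‖z1‖ = l1 ∧ ‖z2‖ = l2 := by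
  rintro ⟨z1, z2, hz, rfl, rfl⟩
  have hc : |c| ≤ a * ‖z1‖ + b * ‖z2‖ := by
    simpa only [abs_of_pos ha, abs_of_pos hb] using abs_le_of_mul_add_mul_add_eq_zero hz
  have hc_sq : c ^ 2 ≤ (a * ‖z1‖ + b * ‖z2‖) ^ 2 := by
    simpa only [sq_abs] using pow_le_pow_left₀ (abs_nonneg c) hc 2
  linarith [mul_add_mul_sq_le (x := ‖z1‖) (y := ‖z2‖) (mul_pos ha hb).le]

/-- If `(a² + ab)λ_1² + (b² + ab)λ_2² < c²`, then there is no zero of `aZ_1 + bZ_2 + c`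
with `|z_1| = λ_1` and `|z_2| = λ_2`. -/
theorem stmt11 (a b c l1 l2 : ℝ) (ha : 0 < a) (hb : 0 < b)
    (hl1 : 0 < l1) (hl2 : 0 < l2)
    (hineq : (a ^ 2 + a * b) * l1 ^ 2 + (b ^ 2 + a * b) * l2 ^ 2 < c ^ 2) :
    ¬ ∃ z1 z2 : ℂ, (a : ℂ) * z1 + (b : ℂ) * z2 + (c : ℂ) = 0 ∧
        ‖z1‖ = l1 ∧ ‖z2‖ = l2 :=
  stmt11_general a b c l1 l2 ha hb hineq
end

section
/- For the polynomial f = aZ_1 + bZ_2 + c with a,b > 0, c ∈ R, a point (λ_1, λ_2) ∈ (0,∞)² lies in the unlog amoeba U_f if and only if the three triangle inequalities hold: aλ_1 ≤ bλ_2 + |c|, bλ_2 ≤ aλ_1 + |c|, and |c| ≤ aλ_1 + bλ_2. -/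
/-! Writing `u = a z₁`, the point lies in the amoeba iff the circles `‖u‖ = aλ₁` and
`‖u + c‖ = bλ₂` meet. On the connected sphere `‖u‖ = r` the function `u ↦ ‖u + c‖` takes the
values `|‖c‖ - r|` and `r + ‖c‖` at `∓ r c / ‖c‖`, so by the intermediate value theorem it takes
every value in between, and that interval is what the triangle inequalities describe. -/

open Metric Set

theorem triangle_of_norm_eq_of_norm_add_eq {E : Type*} [SeminormedAddCommGroup E] {z w : E}
    {r s : ℝ} (hz : ‖z‖ = r) (hzw : ‖z + w‖ = s) :
    r ≤ s + ‖w‖ ∧ s ≤ r + ‖w‖ ∧ ‖w‖ ≤ r + s := by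
  subst hz hzw
  refine ⟨?_, norm_add_le z w, ?_⟩
  · simpa using norm_sub_le (z + w) w
  · simpa [add_comm] using norm_sub_le (z + w) z

section TwoCircles

variable {E : Type*} [NormedAddCommGroup E] [NormedSpace ℝ E]

theorem exists_unit_smul_eq [Nontrivial E] (w : E) : ∃ u : E, ‖u‖ = 1 ∧ ‖w‖ • u = w := by
  by_cases hw : w = 0
  · obtain ⟨u, hu⟩ := exists_norm_eq E zero_le_one
    exact ⟨u, hu, by simp [hw]⟩
  · exact ⟨‖w‖⁻¹ • w, norm_smul_inv_norm hw, smul_inv_smul₀ (norm_ne_zero_iff.mpr hw) w⟩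

theorem exists_norm_eq_and_norm_add_eq_iff (hE : 1 < Module.rank ℝ E) (w : E) (r s : ℝ) :
    (∃ z : E, ‖z‖ = r ∧ ‖z + w‖ = s) ↔ r ≤ s + ‖w‖ ∧ s ≤ r + ‖w‖ ∧ ‖w‖ ≤ r + s := by
  refine ⟨fun ⟨z, hz, hzw⟩ ↦ triangle_of_norm_eq_of_norm_add_eq hz hzw, fun ⟨h₁, h₂, h₃⟩ ↦ ?_⟩
  have : Nontrivial E := rank_pos_iff_nontrivial.mp (zero_lt_one.trans hE)
  obtain ⟨u, hu, hwu⟩ := exists_unit_smul_eq w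
  have hr : 0 ≤ r := by linarith
  have hnear : ‖-(r • u) + w‖ = |‖w‖ - r| := by
    rw [show -(r • u) + w = (‖w‖ - r) • u by rw [sub_smul, hwu]; abel, norm_smul, hu, mul_one,
      Real.norm_eq_abs]
  have hfar : ‖r • u + w‖ = r + ‖w‖ := by
    rw [show r • u + w = (r + ‖w‖) • u by rw [add_smul, hwu], norm_smul, hu, mul_one,
      Real.norm_of_nonneg (by positivity)]
  have hs : s ∈ Icc ‖-(r • u) + w‖ ‖r • u + w‖ := by
    rw [hnear, hfar]
    exact ⟨abs_sub_le_iff.mpr ⟨by linarith, by linarith⟩, h₂⟩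
  obtain ⟨z, hz, hzs⟩ := (isPreconnected_sphere hE 0 r).intermediate_value
    (by simp [norm_smul, hu, abs_of_nonneg hr]) (by simp [norm_smul, hu, abs_of_nonneg hr])
    (continuous_id.add continuous_const).norm.continuousOn hs
  exact ⟨z, mem_sphere_zero_iff_norm.mp hz, hzs⟩

end TwoCircles

theorem stmt12_general (a b c l1 l2 : ℝ) (ha : 0 < a) (hb : 0 < b) :
    (∃ z1 z2 : ℂ, (a : ℂ) * z1 + (b : ℂ) * z2 + (c : ℂ) = 0 ∧
        ‖z1‖ = l1 ∧ ‖z2‖ = l2) ↔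
      (a * l1 ≤ b * l2 + |c| ∧ b * l2 ≤ a * l1 + |c| ∧ |c| ≤ a * l1 + b * l2) := by
  have norm_scale {t : ℝ} (ht : 0 < t) (z : ℂ) (l : ℝ) : ‖(t : ℂ) * z‖ = t * l ↔ ‖z‖ = l := by
    rw [norm_mul, Complex.norm_real, Real.norm_of_nonneg ht.le, mul_right_inj' ht.ne']
  have ha' : (a : ℂ) ≠ 0 := Complex.ofReal_ne_zero.mpr ha.ne'
  have hb' : (b : ℂ) ≠ 0 := Complex.ofReal_ne_zero.mpr hb.ne'
  rw [← Real.norm_eq_abs, ← Complex.norm_real c,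
    ← exists_norm_eq_and_norm_add_eq_iff (Complex.rank_real_complex ▸ Nat.one_lt_ofNat)]
  constructor
  · rintro ⟨z1, z2, hsum, h1, h2⟩
    refine ⟨a * z1, (norm_scale ha z1 l1).mpr h1, ?_⟩
    rw [show (a : ℂ) * z1 + c = -(b * z2) by linear_combination hsum, norm_neg]
    exact (norm_scale hb z2 l2).mpr h2
  · rintro ⟨u, hu, huc⟩
    refine ⟨u / a, -(u + c) / b, by field_simp; ring, ?_, ?_⟩
    · rwa [← norm_scale ha, mul_div_cancel₀ _ ha']
    · rwa [← norm_scale hb, mul_div_cancel₀ _ hb', norm_neg]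

/-- Characterization of linear amoebas: `(λ_1, λ_2)` lies in the unlog amoeba of
`f = aZ_1 + bZ_2 + c` iff the three triangle inequalities hold. -/
theorem stmt12 (a b c l1 l2 : ℝ) (ha : 0 < a) (hb : 0 < b)
    (hl1 : 0 < l1) (hl2 : 0 < l2) :
    (∃ z1 z2 : ℂ, (a : ℂ) * z1 + (b : ℂ) * z2 + (c : ℂ) = 0 ∧
        ‖z1‖ = l1 ∧ ‖z2‖ = l2) ↔
      (a * l1 ≤ b * l2 + |c| ∧ b * l2 ≤ a * l1 + |c| ∧ |c| ≤ a * l1 + b * l2) :=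
  stmt12_general a b c l1 l2 ha hb
end
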